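/- Let q be a prime power, m ≥ 0 and k ≥ 1 integers, and r_1,…,r_k integers with 0 ≤ r_i ≤ m. Then the number of k-tuples (W_1,…,W_k) of 𝔽_q-linear subspaces of 𝔽_q^m with dim W_i = r_i for all i and W_1 ∩ W_2 ∩ ⋯ ∩ W_k = {0} equals Σ_{a=0}^{min_i r_i} (−1)^a q^{binom(a,2)} [m choose a]_q ∏_{i=1}^k [m−a choose r_i−a]_q. -/

import Mathlib

/-
The subspaces of dimension `d` of an `n`-dimensional space over `𝔽_q` are counted by
`[n choose d]_q`: each one is spanned by exactly `∏_{i<d} (q^d - q^i)` of the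
`∏_{i<d} (q^n - q^i)` linearly independent `d`-tuples. By q-Pascal the alternating sum
`∑_a (-1)^a q^(a choose 2) [d choose a]_q` telescopes to `[d = 0]`, i.e.
`μ(0, U) = (-1)^d q^(d choose 2)` is the Möbius function of the subspace lattice. Möbius
inversion then counts the tuples with `W_1 ∩ ⋯ ∩ W_k = 0` as `∑_U μ(0, U)` times the number
of tuples with `U ⊆ W_i` for all `i`; passing to `V ⧸ U`, the latter is
`∏_i [m - dim U choose r_i - dim U]_q`.
-/

/-- The `q`-integer `[m]_q = 1 + q + ⋯ + q^{m-1}`. -/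
noncomputable def qInt (q : ℝ) (m : ℕ) : ℝ := ∑ i ∈ Finset.range m, q ^ i

/-- The `q`-factorial `[m]!_q = [1]_q [2]_q ⋯ [m]_q`. -/
noncomputable def qFact (q : ℝ) (m : ℕ) : ℝ := ∏ i ∈ Finset.range m, qInt q (i + 1)

/-- The `q`-binomial coefficient `[n choose k]_q = [n]!_q / ([k]!_q [n-k]!_q)`. -/
noncomputable def qBinom (q : ℝ) (n k : ℕ) : ℝ := qFact q n / (qFact q k * qFact q (n - k))

open Finset Module Submodule

section QArithmetic

variable {x : ℝ}

lemma qInt_succ_pos (hx : 0 ≤ x) (n : ℕ) : 0 < qInt x (n + 1) :=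
  sum_pos' (fun i _ ↦ pow_nonneg hx i) ⟨0, by simp, by simp⟩

lemma qInt_mul_sub_one (x : ℝ) (n : ℕ) : qInt x n * (x - 1) = x ^ n - 1 :=
  geom_sum_mul x n

lemma qInt_add (x : ℝ) (a b : ℕ) : qInt x (a + b) = qInt x a + x ^ a * qInt x b := by
  simp only [qInt, sum_range_add, mul_sum, pow_add]

@[simp]
lemma qFact_zero (x : ℝ) : qFact x 0 = 1 := prod_range_zero _

lemma qFact_succ (x : ℝ) (n : ℕ) : qFact x (n + 1) = qFact x n * qInt x (n + 1) :=
  prod_range_succ _ _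

lemma qFact_pos (hx : 0 ≤ x) (n : ℕ) : 0 < qFact x n :=
  prod_pos fun i _ ↦ qInt_succ_pos hx i

lemma qFact_eq_qFact_sub_mul_prod (x : ℝ) {n a : ℕ} (h : a ≤ n) :
    qFact x n = qFact x (n - a) * ∏ i ∈ range a, qInt x (n - i) := by
  induction a with
  | zero => simp
  | succ a ih =>
    obtain ⟨c, hc⟩ : ∃ c, n - a = c + 1 := ⟨n - a - 1, by omega⟩
    rw [ih (by omega), hc, qFact_succ, prod_range_succ, show n - (a + 1) = c by omega,
      ← hc]
    ring

lemma qBinom_mul_qFact_mul_qFact (hx : 0 ≤ x) (n a : ℕ) :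
    qBinom x n a * (qFact x a * qFact x (n - a)) = qFact x n :=
  div_mul_cancel₀ _ (mul_pos (qFact_pos hx a) (qFact_pos hx (n - a))).ne'

lemma qBinom_zero (hx : 0 ≤ x) (n : ℕ) : qBinom x n 0 = 1 := by
  rw [qBinom, Nat.sub_zero, qFact_zero, one_mul, div_self (qFact_pos hx n).ne']

lemma qBinom_self (hx : 0 ≤ x) (n : ℕ) : qBinom x n n = 1 := by
  rw [qBinom, Nat.sub_self, qFact_zero, mul_one, div_self (qFact_pos hx n).ne']

lemma qBinom_succ_succ (hx : 0 ≤ x) {n k : ℕ} (h : k < n) :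
    qBinom x (n + 1) (k + 1) = qBinom x n k + x ^ (k + 1) * qBinom x n (k + 1) := by
  obtain ⟨c, rfl⟩ := Nat.exists_eq_add_of_lt h
  have hsplit : qInt x (k + c + 1 + 1) = qInt x (k + 1) + x ^ (k + 1) * qInt x (c + 1) := by
    rw [← qInt_add]; ring_nf
  simp only [qBinom, show k + c + 1 + 1 - (k + 1) = c + 1 by omega,
    show k + c + 1 - k = c + 1 by omega, show k + c + 1 - (k + 1) = c by omega,
    qFact_succ x (k + c + 1), qFact_succ x k, qFact_succ x c, hsplit]
  have := qFact_pos hx k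
  have := qFact_pos hx c
  have := qInt_succ_pos hx k
  have := qInt_succ_pos hx c
  field_simp

lemma pow_sub_pow_eq_mul_qInt (x : ℝ) {n i : ℕ} (h : i ≤ n) :
    x ^ n - x ^ i = x ^ i * (x - 1) * qInt x (n - i) := by
  rw [mul_assoc, mul_comm (x - 1), qInt_mul_sub_one, mul_sub, ← pow_add, Nat.add_sub_cancel' h,
    mul_one]

lemma prod_pow_sub_pow (x : ℝ) {n a : ℕ} (h : a ≤ n) :
    ∏ i ∈ range a, (x ^ n - x ^ i)
      = (∏ i ∈ range a, x ^ i * (x - 1)) * ∏ i ∈ range a, qInt x (n - i) := by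
  rw [← prod_mul_distrib]
  exact prod_congr rfl fun i hi ↦ pow_sub_pow_eq_mul_qInt x (by simp at hi; omega)

lemma qBinom_mul_prod_pow_sub_pow (hx : 0 ≤ x) {n a : ℕ} (h : a ≤ n) :
    qBinom x n a * ∏ i ∈ range a, (x ^ a - x ^ i) = ∏ i ∈ range a, (x ^ n - x ^ i) := by
  have hn : qBinom x n a * qFact x a = ∏ i ∈ range a, qInt x (n - i) := by
    refine mul_right_cancel₀ (qFact_pos hx (n - a)).ne' ?_
    rw [mul_assoc, qBinom_mul_qFact_mul_qFact hx, qFact_eq_qFact_sub_mul_prod x h, mul_comm]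
  have ha : ∏ i ∈ range a, qInt x (a - i) = qFact x a := by
    simpa using (qFact_eq_qFact_sub_mul_prod x (le_refl a)).symm
  rw [prod_pow_sub_pow x le_rfl, prod_pow_sub_pow x h, ha, ← hn]
  ring

/-- The Möbius function `μ(0, U)` of the lattice of subspaces, for `dim U = d`. -/
noncomputable def qMobius (x : ℝ) (d : ℕ) : ℝ := (-1) ^ d * x ^ d.choose 2

lemma sum_qBinom_mul_qMobius (hx : 0 ≤ x) (n : ℕ) :
    ∑ a ∈ range (n + 1), qBinom x n a * qMobius x a = if n = 0 then 1 else 0 := by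
  rcases n with _ | e
  · simp [qBinom_zero hx, qMobius]
  -- by q-Pascal the `(i + 1)`-st term is `w (i + 1) - w i`, so the sum telescopes
  set w : ℕ → ℝ := fun i ↦ (-1) ^ i * x ^ (i + 1).choose 2 * qBinom x e i
  have hstep : ∀ i < e, qBinom x (e + 1) (i + 1) * qMobius x (i + 1) = w (i + 1) - w i := by
    intro i hi
    simp only [w, qMobius, qBinom_succ_succ hx hi, Nat.choose_succ_succ' (i + 1),
      Nat.choose_one_right, pow_succ, pow_add]
    ring
  rw [sum_range_succ, sum_range_succ', sum_congr rfl fun i hi ↦ hstep i (mem_range.mp hi),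
    sum_range_sub]
  simp only [w, qMobius, qBinom_zero hx, qBinom_self hx, Nat.choose_succ_succ' e,
    Nat.choose_one_right, pow_succ, pow_add]
  simp

end QArithmetic

section Quotient

variable {K V : Type*} [DivisionRing K] [AddCommGroup V] [Module K V] [FiniteDimensional K V]

lemma finrank_map_mkQ_add_finrank {U W : Submodule K V} (h : U ≤ W) :
    finrank K (W.map U.mkQ) + finrank K U = finrank K W := by
  have hker : finrank K (LinearMap.ker (U.mkQ.domRestrict W)) = finrank K U := by
    rw [LinearMap.ker_domRestrict, ker_mkQ]
    exact (comapSubtypeEquivOfLe h).finrank_eq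
  rw [← LinearMap.range_domRestrict, ← hker, LinearMap.finrank_range_add_finrank_ker]

lemma card_submodule_le_finrank_eq_card_quotient (U : Submodule K V) {r : ℕ}
    (hr : finrank K U ≤ r) :
    Nat.card {W : Submodule K V // U ≤ W ∧ finrank K W = r}
      = Nat.card {W : Submodule K (V ⧸ U) // finrank K W = r - finrank K U} := by
  refine Nat.card_congr <| (Equiv.subtypeSubtypeEquivSubtypeInter (U ≤ ·) _).symm.trans <|
    (comapMkQRelIso U).symm.toEquiv.subtypeEquiv fun W ↦ ?_
  have := finrank_map_mkQ_add_finrank W.2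
  change finrank K W = r ↔ finrank K (W.1.map U.mkQ) = _
  omega

end Quotient

section Counting

variable {F V : Type} [Field F] [Fintype F] [AddCommGroup V] [Module F V] [Finite V]

/-- `finrank W` linearly independent vectors of `W` automatically span `W`. -/
noncomputable def linearIndependentSpanEqEquiv {a : ℕ} (W : Submodule F V)
    (hW : finrank F W = a) :
    {s : {s : Fin a → V // LinearIndependent F s} // span F (Set.range s.1) = W} ≃
      {t : Fin a → W // LinearIndependent F t} where
  toFun s := ⟨fun i ↦ ⟨s.1.1 i, by
    have h := subset_span (R := F) (Set.mem_range_self (f := s.1.1) i); rwa [s.2] at h⟩,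
    LinearIndependent.of_comp W.subtype s.1.2⟩
  invFun t := ⟨⟨W.subtype ∘ t.1, t.2.map' W.subtype W.ker_subtype⟩, by
    rw [Set.range_comp, span_image,
      t.2.span_eq_top_of_card_eq_finrank' (by rw [Fintype.card_fin, hW]), map_subtype_top]⟩
  left_inv _ := rfl
  right_inv _ := rfl

lemma card_submodule_finrank_eq_mul_prod {a : ℕ} (ha : a ≤ finrank F V) :
    Nat.card {W : Submodule F V // finrank F W = a} *
        ∏ i : Fin a, (Fintype.card F ^ a - Fintype.card F ^ (i : ℕ))
      = ∏ i : Fin a, (Fintype.card F ^ finrank F V - Fintype.card F ^ (i : ℕ)) := by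
  let span' (s : {s : Fin a → V // LinearIndependent F s}) :
      {W : Submodule F V // finrank F W = a} :=
    ⟨span F (Set.range s.1), by rw [finrank_span_eq_card s.2, Fintype.card_fin]⟩
  have hfiber (W : {W : Submodule F V // finrank F W = a}) :
      Nat.card {s // span' s = W}
        = ∏ i : Fin a, (Fintype.card F ^ a - Fintype.card F ^ (i : ℕ)) := by
    have hW := card_linearIndependent (K := F) (V := W.1) W.2.ge
    rw [W.2] at hW
    rw [← hW]
    exact Nat.card_congr ((Equiv.subtypeEquivRight fun s ↦ Subtype.ext_iff).trans
      (linearIndependentSpanEqEquiv W.1 W.2))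
  have := Fintype.ofFinite {W : Submodule F V // finrank F W = a}
  rw [← card_linearIndependent ha, ← Nat.card_congr (Equiv.sigmaFiberEquiv span'),
    Nat.card_sigma, sum_congr rfl fun W _ ↦ hfiber W, sum_const, card_univ, smul_eq_mul,
    Nat.card_eq_fintype_card]

lemma cast_prod_pow_sub_pow {q : ℕ} (hq : 0 < q) {a b : ℕ} (h : a ≤ b) :
    ((∏ i : Fin a, (q ^ b - q ^ (i : ℕ)) : ℕ) : ℝ)
      = ∏ i ∈ range a, ((q : ℝ) ^ b - (q : ℝ) ^ i) := by
  rw [Fin.prod_univ_eq_prod_range (fun i ↦ q ^ b - q ^ i), Nat.cast_prod]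
  refine prod_congr rfl fun i hi ↦ ?_
  rw [Nat.cast_sub (Nat.pow_le_pow_right hq (by simp at hi; omega)), Nat.cast_pow, Nat.cast_pow]

lemma card_submodule_finrank_eq {a : ℕ} (ha : a ≤ finrank F V) :
    (Nat.card {W : Submodule F V // finrank F W = a} : ℝ)
      = qBinom (Fintype.card F) (finrank F V) a := by
  have hq : (1 : ℝ) < Fintype.card F := by exact_mod_cast Fintype.one_lt_card
  have hprod : ∏ i ∈ range a, ((Fintype.card F : ℝ) ^ a - (Fintype.card F : ℝ) ^ i) ≠ 0 :=
    prod_ne_zero_iff.mpr fun i hi ↦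
      (sub_pos.mpr (pow_lt_pow_right₀ hq (mem_range.mp hi))).ne'
  refine mul_right_cancel₀ hprod ?_
  rw [qBinom_mul_prod_pow_sub_pow (by positivity) ha,
    ← cast_prod_pow_sub_pow Fintype.card_pos le_rfl,
    ← cast_prod_pow_sub_pow Fintype.card_pos ha, ← Nat.cast_mul,
    card_submodule_finrank_eq_mul_prod ha]

lemma card_submodule_le_finrank_eq (U : Submodule F V) {r : ℕ} (hr : r ≤ finrank F V) :
    (Nat.card {W : Submodule F V // U ≤ W ∧ finrank F W = r} : ℝ)
      = if finrank F U ≤ r then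
          qBinom (Fintype.card F) (finrank F V - finrank F U) (r - finrank F U)
        else 0 := by
  split_ifs with hU
  · have : Finite (V ⧸ U) := Finite.of_surjective _ U.mkQ_surjective
    rw [card_submodule_le_finrank_eq_card_quotient U hU,
      card_submodule_finrank_eq (by rw [finrank_quotient]; omega), finrank_quotient]
  · have : IsEmpty {W : Submodule F V // U ≤ W ∧ finrank F W = r} :=
      ⟨fun W ↦ hU (W.2.2 ▸ finrank_mono W.2.1)⟩
    simp

lemma card_tuple_finrank_le_iInf {ι : Type*} [Fintype ι] {r : ι → ℕ}
    (hr : ∀ i, r i ≤ finrank F V) (U : Submodule F V) :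
    (Nat.card {W : {W : ι → Submodule F V // ∀ i, finrank F (W i) = r i} //
      U ≤ ⨅ i, W.1 i} : ℝ)
      = ∏ i, if finrank F U ≤ r i then
          qBinom (Fintype.card F) (finrank F V - finrank F U) (r i - finrank F U)
        else 0 := by
  have e : {W : {W : ι → Submodule F V // ∀ i, finrank F (W i) = r i} // U ≤ ⨅ i, W.1 i}
      ≃ ∀ i, {w : Submodule F V // U ≤ w ∧ finrank F w = r i} :=
    (Equiv.subtypeSubtypeEquivSubtypeInter (fun W : ι → Submodule F V ↦
      ∀ i, finrank F (W i) = r i) fun W ↦ U ≤ ⨅ i, W i).trans <|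
      (Equiv.subtypeEquivRight fun W ↦ by
        rw [le_iInf_iff, ← forall_and]; exact forall_congr' fun _ ↦ and_comm).trans
        Equiv.subtypePiEquivPi
  rw [Nat.card_congr e, Nat.card_pi, Nat.cast_prod]
  exact prod_congr rfl fun i _ ↦ card_submodule_le_finrank_eq U (hr i)

variable [Fintype (Submodule F V)]

lemma sum_submodule_comp_finrank (f : ℕ → ℝ) :
    ∑ U : Submodule F V, f (finrank F U)
      = ∑ d ∈ range (finrank F V + 1), qBinom (Fintype.card F) (finrank F V) d * f d := by
  classical
  rw [← sum_fiberwise_of_maps_to (t := range (finrank F V + 1))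
    (g := fun U : Submodule F V ↦ finrank F U)
    fun U _ ↦ mem_range.mpr (Nat.lt_succ_of_le (finrank_le U))]
  refine sum_congr rfl fun d hd ↦ ?_
  rw [sum_congr rfl fun U hU ↦ by rw [(mem_filter.mp hU).2], sum_const, nsmul_eq_mul,
    ← card_submodule_finrank_eq (Nat.lt_succ_iff.mp (mem_range.mp hd)), Nat.card_eq_fintype_card,
    Fintype.card_subtype]

open Classical in
lemma sum_le_qMobius_finrank (U' : Submodule F V) :
    ∑ U : Submodule F V, (if U ≤ U' then qMobius (Fintype.card F) (finrank F U) else 0)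
      = if U' = ⊥ then 1 else 0 := by
  have := Fintype.ofFinite (Submodule F U')
  rw [← sum_filter, sum_subtype _ (p := (· ≤ U')) fun U ↦ by simp,
    ← Fintype.sum_equiv (MapSubtype.orderIso U').toEquiv
      (fun U ↦ qMobius (Fintype.card F) (finrank F U)) _
      fun U ↦ congrArg _ (finrank_map_subtype_eq U' U).symm,
    sum_submodule_comp_finrank, sum_qBinom_mul_qMobius (Nat.cast_nonneg _)]
  exact if_congr finrank_eq_zero rfl rfl

lemma card_eq_bot_eq_sum_qMobius {α : Type*} [Finite α] (g : α → Submodule F V) :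
    (Nat.card {x // g x = ⊥} : ℝ)
      = ∑ U : Submodule F V,
          qMobius (Fintype.card F) (finrank F U) * Nat.card {x // U ≤ g x} := by
  classical
  have := Fintype.ofFinite α
  simp only [Nat.card_eq_fintype_card, Fintype.card_subtype, card_filter, Nat.cast_sum,
    Nat.cast_ite, Nat.cast_one, Nat.cast_zero, mul_sum, mul_ite, mul_one, mul_zero]
  rw [sum_comm]
  exact sum_congr rfl fun x _ ↦ (sum_le_qMobius_finrank (g x)).symm

end Counting

lemma sum_range_ite_le {s m : ℕ} (h : s ≤ m) (f : ℕ → ℝ) :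
    ∑ d ∈ range (m + 1), (if d ≤ s then f d else 0) = ∑ d ∈ range (s + 1), f d := by
  rw [← sum_filter]
  congr 1
  ext d
  simp only [mem_filter, mem_range]
  omega

/-- The Möbius-inversion count of `k`-tuples `(W_1, …, W_k)` of subspaces of `F_q^m`
with `dim W_i = r_i` and `W_1 ∩ ⋯ ∩ W_k = {0}`. -/
theorem tuples_of_subspaces_with_zero_intersection
    (F : Type) [Field F] [Fintype F] (q : ℝ) (hq : q = Fintype.card F)
    (m k : ℕ) [NeZero k] (r : Fin k → ℕ) (hr : ∀ i, r i ≤ m) :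
    (Nat.card {W : Fin k → Submodule F (Fin m → F) //
        (∀ i, Module.finrank F (W i) = r i) ∧ (⨅ i, W i) = ⊥} : ℝ)
    = ∑ a ∈ Finset.range (Finset.univ.inf' Finset.univ_nonempty r + 1),
        (-1 : ℝ) ^ a * q ^ (a * (a - 1) / 2) * qBinom q m a *
          ∏ i, qBinom q (m - a) (r i - a) := by
  classical
  subst hq
  have := Fintype.ofFinite (Submodule F (Fin m → F))
  have hdim : finrank F (Fin m → F) = m := finrank_fin_fun F
  have hinf : univ.inf' univ_nonempty r ≤ m := (inf'_le r (mem_univ 0)).trans (hr 0)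
  rw [← Nat.card_congr (Equiv.subtypeSubtypeEquivSubtypeInter _ _),
    card_eq_bot_eq_sum_qMobius fun W : {W : Fin k → Submodule F (Fin m → F) //
      ∀ i, finrank F (W i) = r i} ↦ ⨅ i, W.1 i]
  simp only [card_tuple_finrank_le_iInf (hdim ▸ hr), hdim]
  rw [sum_submodule_comp_finrank (fun d ↦ qMobius _ d *
      ∏ i, if d ≤ r i then qBinom (Fintype.card F) (m - d) (r i - d) else 0), hdim]
  have hle (a : ℕ) : (∀ i ∈ univ, a ≤ r i) ↔ a ≤ univ.inf' univ_nonempty r :=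
    (le_inf'_iff _ _).symm
  simp only [prod_ite_zero, hle, mul_ite, mul_zero, sum_range_ite_le hinf, qMobius,
    Nat.choose_two_right]
  exact sum_congr rfl fun a _ ↦ by ring
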